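/- Let S > 0, κ ∈ ℝ, σ > 0, and set h = √(κ² + 2σ²). Define B : (−∞,S] → ℝ by B(t) = −2(e^{(S−t)h} − 1)/(2h + (κ+h)(e^{(S−t)h} − 1)). Then: (i) the denominator 2h + (κ+h)(e^{(S−t)h} − 1) is strictly positive for all t ≤ S; (ii) B(S) = 0; (iii) B is differentiable and satisfies B'(t) = 1 + κB(t) − (1/2)σ²B(t)² for all t ≤ S; and (iv) B(t) < 0 for all t < S. -/

import Mathlib

/-!
Writing `E = e^{(S-t)h}` and `D = 2h + (κ+h)(E-1)`, the quotient rule gives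
`B' = 4h²E/D²`, and because `2σ² = h² - κ²` the right-hand side of the Riccati
equation collapses to the same expression. Positivity of `D` and the sign of `B`
come from `E ≥ 1` together with `h > 0` and `κ + h ≥ κ + |κ| ≥ 0`.
-/

open Real

namespace CIR

noncomputable def riccatiDenom (κ h S t : ℝ) : ℝ :=
  2 * h + (κ + h) * (exp ((S - t) * h) - 1)

noncomputable def riccatiB (κ h S t : ℝ) : ℝ :=
  -2 * (exp ((S - t) * h) - 1) / riccatiDenom κ h S t

variable {κ h S t : ℝ}

lemma add_sqrt_sq_add_nonneg {c : ℝ} (hc : 0 ≤ c) (κ : ℝ) : 0 ≤ κ + √(κ ^ 2 + c) := by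
  have : |κ| ≤ √(κ ^ 2 + c) := abs_le_sqrt (by linarith)
  linarith [neg_abs_le κ]

lemma riccatiDenom_pos (hh : 0 < h) (hκh : 0 ≤ κ + h) (ht : t ≤ S) :
    0 < riccatiDenom κ h S t := by
  have hE : 1 ≤ exp ((S - t) * h) := one_le_exp (mul_nonneg (sub_nonneg.2 ht) hh.le)
  unfold riccatiDenom
  nlinarith

@[simp]
lemma riccatiB_self : riccatiB κ h S S = 0 := by
  simp [riccatiB]

lemma riccatiB_neg (hh : 0 < h) (hD : 0 < riccatiDenom κ h S t) (ht : t < S) :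
    riccatiB κ h S t < 0 := by
  have hE : 1 < exp ((S - t) * h) := one_lt_exp_iff.2 (mul_pos (sub_pos.2 ht) hh)
  exact div_neg_of_neg_of_pos (by linarith) hD

lemma hasDerivAt_riccatiB (hD : riccatiDenom κ h S t ≠ 0) :
    HasDerivAt (riccatiB κ h S)
      (4 * h ^ 2 * exp ((S - t) * h) / riccatiDenom κ h S t ^ 2) t := by
  have hE : HasDerivAt (fun t => exp ((S - t) * h)) (exp ((S - t) * h) * (-1 * h)) t :=
    (((hasDerivAt_id t).const_sub S).mul_const h).exp
  have hN := (hE.sub_const 1).const_mul (-2)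
  have hDt := ((hE.sub_const 1).const_mul (κ + h)).const_add (2 * h)
  refine (hN.div hDt hD).congr_deriv ?_
  rw [riccatiDenom]
  ring

/-- With `u = E - 1` and `2σ² = h² - κ²`, one has `D² - 2κuD - 2σ²u² = 4h²(1 + u) = 4h²E`. -/
lemma riccati_rhs_riccatiB_eq {σ : ℝ} (hσ : h ^ 2 = κ ^ 2 + 2 * σ ^ 2)
    (hD : riccatiDenom κ h S t ≠ 0) :
    1 + κ * riccatiB κ h S t - 1 / 2 * σ ^ 2 * riccatiB κ h S t ^ 2
      = 4 * h ^ 2 * exp ((S - t) * h) / riccatiDenom κ h S t ^ 2 := by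
  have hσ2 : σ ^ 2 = (h ^ 2 - κ ^ 2) / 2 := by linarith
  rw [riccatiB, hσ2]
  field_simp
  unfold riccatiDenom
  ring

end CIR

open CIR in
theorem riccati_B_closed_form
    (S κ σ : ℝ) (hσ : 0 < σ)
    (h : ℝ) (hh : h = Real.sqrt (κ ^ 2 + 2 * σ ^ 2))
    (B : ℝ → ℝ)
    (hB : ∀ t, B t = -2 * (Real.exp ((S - t) * h) - 1) /
      (2 * h + (κ + h) * (Real.exp ((S - t) * h) - 1))) :
    (∀ t ≤ S, 0 < 2 * h + (κ + h) * (Real.exp ((S - t) * h) - 1))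
    ∧ B S = 0
    ∧ (∀ t ≤ S, HasDerivAt B (1 + κ * B t - 1 / 2 * σ ^ 2 * (B t) ^ 2) t)
    ∧ (∀ t < S, B t < 0) := by
  obtain rfl : B = riccatiB κ h S := funext hB
  have hrad : 0 < κ ^ 2 + 2 * σ ^ 2 := by positivity
  have hpos : 0 < h := hh ▸ sqrt_pos.2 hrad
  have hsq : h ^ 2 = κ ^ 2 + 2 * σ ^ 2 := hh ▸ sq_sqrt hrad.le
  have hκh : 0 ≤ κ + h := hh ▸ add_sqrt_sq_add_nonneg (by positivity) κ
  have hD : ∀ t ≤ S, 0 < riccatiDenom κ h S t := fun t ht => riccatiDenom_pos hpos hκh ht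
  refine ⟨hD, riccatiB_self, fun t ht => ?_, fun t ht => riccatiB_neg hpos (hD t ht.le) ht⟩
  rw [riccati_rhs_riccatiB_eq hsq (hD t ht).ne']
  exact hasDerivAt_riccatiB (hD t ht).ne'
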